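/- The equation ε·η(ε) = 1 has exactly 6 solutions ε in the H₄ root system Δ_{H₄} = 𝕀 ∩ 𝕊³, namely ±1 and ±½(±1, 0, τ, τ−1); these 6 solutions form a cyclic group of order 6 under quaternion multiplication, generated by ½(1,0,τ,τ−1). -/

import Mathlib

open Polynomial Quaternion

noncomputable section

set_option maxRecDepth 8000
set_option synthInstance.maxHeartbeats 1000000
set_option maxHeartbeats 1000000

def f5 : ℚ[X] := X ^ 2 - C 5

instance f5_irred : Fact (Irreducible f5) := ⟨by
  unfold f5
  apply X_pow_sub_C_irreducible_of_prime Nat.prime_two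
  intro b hb
  have h5 : Irrational (Real.sqrt 5) := (Nat.prime_five).irrational_sqrt
  have hb' : ((b : ℝ)) ^ 2 = 5 := by exact_mod_cast congrArg (fun q : ℚ => (q : ℝ)) hb
  have heq : Real.sqrt 5 = |(b : ℝ)| := by
    rw [← hb', Real.sqrt_sq_eq_abs]
  rw [heq] at h5
  exact h5 ⟨|b|, by push_cast; ring⟩⟩

abbrev K : Type := AdjoinRoot f5

instance : Field K := inferInstance
instance : SMul K (Quaternion K) := inferInstance
instance : Algebra K (Quaternion K) := inferInstance

def sqrt5 : K := AdjoinRoot.root f5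

lemma sqrt5_sq : sqrt5 ^ 2 = 5 := by
  have h : AdjoinRoot.mk f5 (X ^ 2 - C 5) = 0 := AdjoinRoot.mk_self
  rw [map_sub, map_pow, AdjoinRoot.mk_X, AdjoinRoot.mk_C, sub_eq_zero] at h
  simpa [sqrt5] using h

def conjK : K →+* K :=
  AdjoinRoot.lift (algebraMap ℚ K) (-sqrt5) (by
    simp only [f5, eval₂_sub, eval₂_pow, eval₂_X, eval₂_C, sub_eq_zero]
    have h : (-sqrt5) ^ 2 = sqrt5 ^ 2 := by ring
    rw [h, sqrt5_sq]
    simp)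

def τ : K := (1 + sqrt5) / 2

abbrev ℍK := Quaternion K

def twist (x : ℍK) : ℍK := ⟨conjK x.re, conjK x.imI, conjK x.imK, conjK x.imJ⟩

def icoB : Fin 4 → ℍK :=
  ![1, ⟨0,1,0,0⟩, ⟨1/2,1/2,1/2,1/2⟩, ⟨(1-τ)/2, τ/2, 0, 1/2⟩]

def Ico : AddSubgroup ℍK :=
  AddSubgroup.closure (Set.range icoB ∪ Set.range fun i => τ • icoB i)

def lB : Fin 4 → ℍK :=
  ![1, ⟨-(1/2),1/2,1/2,1/2⟩, ⟨0,-1,0,0⟩, ⟨0,1/2,(τ-1)/2,-(τ/2)⟩]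

def LatA4 : AddSubgroup ℍK := AddSubgroup.closure (Set.range lB)

def LatATau : AddSubgroup ℍK :=
  AddSubgroup.closure (Set.range lB ∪ Set.range fun i => τ • lB i)


/-- The H₄ root system: the 120 unit icosians 𝕀 ∩ 𝕊³ (for icosians, lying on the
unit sphere is equivalent to having reduced norm 1). -/
def ΔH4 : Set ℍK := {x | x ∈ Ico ∧ normSq x = 1}

def g6 : ℍK := ⟨1/2, 0, τ/2, (τ-1)/2⟩

def g6' : ℍK := ⟨-(1/2), 0, τ/2, (τ-1)/2⟩

/-!
Because `normSq ε = 1`, the equation `ε * η ε = 1` says `η ε = star ε`; with `′` the Galois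
conjugation of `ℚ(√5)` this reads `ε₀′ = ε₀`, `ε₁′ = -ε₁`, `ε₃′ = -ε₂`. Writing an icosian on
the `ℤ`-generators `bᵢ`, `τ bᵢ` of `𝕀` and its components on the basis `1, τ` of `ℤ[τ]`, these
become linear conditions on the eight integer coefficients. They leave four integers with
`2ε = (a, s√5, dτ - c - d, c + dτ)` and `a ≡ c [ZMOD 2]`, and `normSq ε = 1` becomes
`a² + 5s² + (c + d)² + c² + 2d² = 4`, whose solutions are exactly `±1, ±g6, ±g6'`.
Conversely `g6² = g6 - 1 = g6'`, so `g6` is a primitive sixth root of unity whose powers are the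
six solutions.
-/

instance : CharZero K := charZero_of_injective_algebraMap (algebraMap ℚ K).injective

lemma tau_sq : τ ^ 2 = τ + 1 := by
  rw [τ]
  linear_combination sqrt5_sq / 4

lemma two_mul_tau_sub_one_sq : (2 * τ - 1) ^ 2 = 5 := by
  linear_combination 4 * tau_sq

lemma conjK_tau : conjK τ = 1 - τ := by
  have h : conjK sqrt5 = -sqrt5 := AdjoinRoot.lift_root _
  rw [τ, map_div₀, map_add, map_one, map_ofNat, h]
  ring

lemma conjK_intCast_add_mul_tau (p q : ℤ) :
    conjK (p + q * τ) = ((p + q : ℤ) : K) + ((-q : ℤ) : K) * τ := by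
  rw [map_add, map_mul, map_intCast, map_intCast, conjK_tau]
  push_cast
  ring

lemma intCast_add_mul_tau_inj {p q p' q' : ℤ} :
    (p : K) + q * τ = p' + q' * τ ↔ p = p' ∧ q = q' := by
  refine ⟨fun h => ?_, by rintro ⟨rfl, rfl⟩; rfl⟩
  have hconj := congrArg conjK h
  rw [conjK_intCast_add_mul_tau, conjK_intCast_add_mul_tau] at hconj
  have hq : ((q - q' : ℤ) : K) * (2 * τ - 1) = 0 := by
    push_cast at hconj ⊢
    linear_combination h - hconj
  have hτ : (2 * τ - 1 : K) ≠ 0 := fun h0 => by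
    simpa [h0] using two_mul_tau_sub_one_sq
  obtain rfl : q = q' := sub_eq_zero.1 (by exact_mod_cast (mul_eq_zero.1 hq).resolve_right hτ)
  exact ⟨by exact_mod_cast add_right_cancel h, rfl⟩

lemma mul_eq_one_iff_eq_star_of_normSq_eq_one {R : Type*} [CommRing R] {x y : ℍ[R]}
    (hx : normSq x = 1) : x * y = 1 ↔ y = star x := by
  constructor
  · intro h
    calc y = star x * x * y := by rw [star_mul_self, hx, Quaternion.coe_one, one_mul]
      _ = star x := by rw [mul_assoc, h, mul_one]
  · rintro rfl
    rw [self_mul_star, hx, Quaternion.coe_one]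

section SixthRootOfUnity

variable {R : Type*} [Ring R] {ζ : R}

lemma pow_three_eq_neg_one_of_sq_eq_sub_one (h : ζ ^ 2 = ζ - 1) : ζ ^ 3 = -1 := by
  rw [pow_succ', h, mul_sub, ← sq, h, mul_one, sub_sub_cancel_left]

lemma pow_six_eq_one_of_sq_eq_sub_one (h : ζ ^ 2 = ζ - 1) : ζ ^ 6 = 1 := by
  rw [show 6 = 3 * 2 from rfl, pow_mul, pow_three_eq_neg_one_of_sq_eq_sub_one h, neg_one_sq]

lemma setOf_exists_eq_pow_of_sq_eq_sub_one (h : ζ ^ 2 = ζ - 1) :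
    {x : R | ∃ n : ℕ, x = ζ ^ n} = {1, -1, ζ, -ζ, ζ - 1, -(ζ - 1)} := by
  have h₃ := pow_three_eq_neg_one_of_sq_eq_sub_one h
  have h₄ : ζ ^ 4 = -ζ := by rw [pow_succ, h₃, neg_one_mul]
  have h₅ : ζ ^ 5 = -(ζ - 1) := by rw [pow_add ζ 3 2, h₃, h, neg_one_mul]
  ext x
  simp only [Set.mem_ofPred_eq, Set.mem_insert_iff, Set.mem_singleton_iff]
  constructor
  · rintro ⟨n, rfl⟩
    rw [pow_eq_pow_mod n (pow_six_eq_one_of_sq_eq_sub_one h)]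
    have : n % 6 < 6 := Nat.mod_lt n (by norm_num)
    interval_cases n % 6 <;> simp [h, h₃, h₄, h₅]
  · rintro (rfl | rfl | rfl | rfl | rfl | rfl)
    exacts [⟨0, (pow_zero _).symm⟩, ⟨3, h₃.symm⟩, ⟨1, (pow_one _).symm⟩, ⟨4, h₄.symm⟩,
      ⟨2, h.symm⟩, ⟨5, h₅.symm⟩]

lemma orderOf_eq_six_of_sq_eq_sub_one (h : ζ ^ 2 = ζ - 1) (h₂ : ζ - 1 ≠ 1)
    (h₃ : (-1 : R) ≠ 1) : orderOf ζ = 6 := by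
  refine orderOf_eq_of_pow_and_pow_div_prime (by norm_num) (pow_six_eq_one_of_sq_eq_sub_one h) ?_
  intro p hp hp6
  rcases (Nat.Prime.dvd_mul hp).1 (show p ∣ 2 * 3 from hp6) with h2 | h3
  · rwa [(Nat.prime_dvd_prime_iff_eq hp Nat.prime_two).1 h2, show 6 / 2 = 3 from rfl,
      pow_three_eq_neg_one_of_sq_eq_sub_one h]
  · rwa [(Nat.prime_dvd_prime_iff_eq hp Nat.prime_three).1 h3, show 6 / 3 = 2 from rfl, h]

end SixthRootOfUnity

@[simp] lemma re_twist (x : ℍK) : (twist x).re = conjK x.re := rfl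
@[simp] lemma imI_twist (x : ℍK) : (twist x).imI = conjK x.imI := rfl
@[simp] lemma imJ_twist (x : ℍK) : (twist x).imJ = conjK x.imK := rfl
@[simp] lemma imK_twist (x : ℍK) : (twist x).imK = conjK x.imJ := rfl

lemma twist_neg (x : ℍK) : twist (-x) = -twist x := by
  ext <;> simp

lemma twist_sub_one (x : ℍK) : twist (x - 1) = twist x - 1 := by
  ext <;> simp

-- `m`, `k` are the coefficients of `x` on the generators `icoB i` and `τ • icoB i` of `Ico`.
lemma exists_coeffs_of_mem_Ico {x : ℍK} (hx : x ∈ Ico) :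
    ∃ m k : Fin 4 → ℤ,
      2 * x.re = ((2 * m 0 + m 2 + m 3 - k 3 : ℤ) : K) + ((2 * k 0 + k 2 - m 3 : ℤ) : K) * τ ∧
      2 * x.imI = ((2 * m 1 + m 2 + k 3 : ℤ) : K) + ((m 3 + 2 * k 1 + k 2 + k 3 : ℤ) : K) * τ ∧
      2 * x.imJ = ((m 2 : ℤ) : K) + ((k 2 : ℤ) : K) * τ ∧
      2 * x.imK = ((m 2 + m 3 : ℤ) : K) + ((k 2 + k 3 : ℤ) : K) * τ := by
  rw [Ico, ← Set.Sum.elim_range, AddSubgroup.mem_closure_range_iff_of_fintype] at hx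
  obtain ⟨a, rfl⟩ := hx
  refine ⟨fun i => a (.inl i), fun i => a (.inr i), ?_, ?_, ?_, ?_⟩ <;>
    simp only [Fintype.sum_sum_type, Fin.sum_univ_four, Sum.elim_inl, Sum.elim_inr,
      Quaternion.re_add, Quaternion.imI_add, Quaternion.imJ_add, Quaternion.imK_add,
      Quaternion.re_smul, Quaternion.imI_smul, Quaternion.imJ_smul, Quaternion.imK_smul] <;>
    simp [icoB, zsmul_eq_mul]
  · linear_combination -(a (.inr 3) : K) * tau_sq
  · linear_combination (a (.inr 3) : K) * tau_sq
  · ring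
  · ring

lemma coeffs_rel_of_twist_eq_star {x : ℍK} {A B C D E F G H : ℤ}
    (hre : 2 * x.re = A + B * τ) (himI : 2 * x.imI = C + D * τ)
    (himJ : 2 * x.imJ = E + F * τ) (himK : 2 * x.imK = G + H * τ) (h : twist x = star x) :
    B = 0 ∧ 2 * C + D = 0 ∧ G + H + E = 0 ∧ H = F := by
  have h₀ : conjK x.re = x.re := by simpa using congrArg QuaternionAlgebra.re h
  have h₁ : conjK x.imI = -x.imI := congrArg QuaternionAlgebra.imI h
  have h₃ : conjK x.imK = -x.imJ := congrArg QuaternionAlgebra.imJ h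
  have e₀ := (intCast_add_mul_tau_inj (p' := A) (q' := B)).1 <| by
    rw [← conjK_intCast_add_mul_tau, ← hre, map_mul, map_ofNat, h₀]
  have e₁ := (intCast_add_mul_tau_inj (p' := -C) (q' := -D)).1 <| by
    rw [← conjK_intCast_add_mul_tau, ← himI, map_mul, map_ofNat, h₁]
    push_cast
    linear_combination -himI
  have e₃ := (intCast_add_mul_tau_inj (p' := -E) (q' := -F)).1 <| by
    rw [← conjK_intCast_add_mul_tau, ← himK, map_mul, map_ofNat, h₃]
    push_cast
    linear_combination -himJ
  omega

lemma exists_int_coords_of_mem_Ico_of_twist_eq_star {x : ℍK} (hx : x ∈ Ico)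
    (h : twist x = star x) :
    ∃ a s c d : ℤ, a % 2 = c % 2 ∧ 2 * x.re = a ∧ 2 * x.imI = s * (2 * τ - 1) ∧
      2 * x.imJ = d * τ - (c + d) ∧ 2 * x.imK = c + d * τ := by
  obtain ⟨m, k, hre, himI, himJ, himK⟩ := exists_coeffs_of_mem_Ico hx
  obtain ⟨e₀, e₁, e₂, e₃⟩ := coeffs_rel_of_twist_eq_star hre himI himJ himK h
  obtain ⟨hk3, hm3, hm2, hk1⟩ : k 3 = 0 ∧ m 3 = 2 * k 0 + k 2 ∧ m 2 = -(k 0 + k 2) ∧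
    k 1 = -2 * m 1 := by omega
  simp only [hk3, hm3, hm2, hk1] at hre himI himJ himK
  refine ⟨2 * m 0 + k 0, k 0 + k 2 - 2 * m 1, k 0, k 2, by omega, ?_, ?_, ?_, ?_⟩ <;>
    push_cast at hre himI himJ himK ⊢
  · linear_combination hre
  · linear_combination himI
  · linear_combination himJ
  · linear_combination himK

lemma four_mul_normSq_of_int_coords {x : ℍK} {a s c d : ℤ} (hre : 2 * x.re = a)
    (himI : 2 * x.imI = s * (2 * τ - 1)) (himJ : 2 * x.imJ = d * τ - (c + d))
    (himK : 2 * x.imK = c + d * τ) :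
    4 * normSq x = ((a ^ 2 + 5 * s ^ 2 + (c + d) ^ 2 + c ^ 2 + 2 * d ^ 2 : ℤ) : K) := by
  have h : 4 * normSq x =
      (2 * x.re) ^ 2 + (2 * x.imI) ^ 2 + (2 * x.imJ) ^ 2 + (2 * x.imK) ^ 2 := by
    rw [normSq_def']
    ring
  rw [h, hre, himI, himJ, himK]
  push_cast
  linear_combination (s : K) ^ 2 * two_mul_tau_sub_one_sq + 2 * (d : K) ^ 2 * tau_sq

lemma int_solutions_of_sum_sq_eq_four {a s c d : ℤ} (hpar : a % 2 = c % 2)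
    (h : a ^ 2 + 5 * s ^ 2 + (c + d) ^ 2 + c ^ 2 + 2 * d ^ 2 = 4) :
    s = 0 ∧ c = -d ∧ ((d = 0 ∧ (a = 2 ∨ a = -2)) ∨ ((d = 1 ∨ d = -1) ∧ (a = 1 ∨ a = -1))) := by
  have hs : s = 0 := by nlinarith [sq_nonneg a, sq_nonneg (c + d), sq_nonneg c, sq_nonneg d]
  subst hs
  obtain ⟨ha₁, ha₂⟩ : -2 ≤ a ∧ a ≤ 2 := by
    constructor <;> nlinarith [sq_nonneg (c + d), sq_nonneg c, sq_nonneg d]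
  obtain ⟨hc₁, hc₂⟩ : -2 ≤ c ∧ c ≤ 2 := by
    constructor <;> nlinarith [sq_nonneg (c + d), sq_nonneg a, sq_nonneg d]
  obtain ⟨hd₁, hd₂⟩ : -1 ≤ d ∧ d ≤ 1 := by
    constructor <;> nlinarith [sq_nonneg (c + d), sq_nonneg c, sq_nonneg a]
  interval_cases a <;> interval_cases c <;> interval_cases d <;> omega

lemma mem_six_of_eq_half_coords {ε : ℍK} {a d : ℤ}
    (hε : ε = ⟨a / 2, 0, d * τ / 2, d * (τ - 1) / 2⟩)
    (had : (d = 0 ∧ (a = 2 ∨ a = -2)) ∨ ((d = 1 ∨ d = -1) ∧ (a = 1 ∨ a = -1))) :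
    ε ∈ ({1, -1, g6, -g6, g6', -g6'} : Set ℍK) := by
  simp only [Set.mem_insert_iff, Set.mem_singleton_iff]
  rcases had with ⟨rfl, rfl | rfl⟩ | ⟨rfl | rfl, rfl | rfl⟩
  · refine .inl ?_
    ext <;> simp [hε]
  · refine .inr <| .inl ?_
    ext <;> simp [hε]
  · refine .inr <| .inr <| .inl ?_
    ext <;> simp [hε, g6]
  · refine .inr <| .inr <| .inr <| .inr <| .inl ?_
    ext <;> norm_num [hε, g6']
  · refine .inr <| .inr <| .inr <| .inr <| .inr ?_
    ext <;> simp only [Quaternion.re_neg, Quaternion.imI_neg, Quaternion.imJ_neg,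
      Quaternion.imK_neg] <;> simp [hε, g6'] <;> ring
  · refine .inr <| .inr <| .inr <| .inl ?_
    ext <;> simp only [Quaternion.re_neg, Quaternion.imI_neg, Quaternion.imJ_neg,
      Quaternion.imK_neg] <;> simp [hε, g6] <;> ring

lemma mem_six_of_mul_twist_eq_one {ε : ℍK} (hε : ε ∈ ΔH4) (h : ε * twist ε = 1) :
    ε ∈ ({1, -1, g6, -g6, g6', -g6'} : Set ℍK) := by
  obtain ⟨hIco, hn⟩ := hε
  have hstar : twist ε = star ε := (mul_eq_one_iff_eq_star_of_normSq_eq_one hn).1 h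
  obtain ⟨a, s, c, d, hpar, hre, himI, himJ, himK⟩ :=
    exists_int_coords_of_mem_Ico_of_twist_eq_star hIco hstar
  have hsum := four_mul_normSq_of_int_coords hre himI himJ himK
  rw [hn, mul_one] at hsum
  obtain ⟨rfl, rfl, had⟩ := int_solutions_of_sum_sq_eq_four hpar (by exact_mod_cast hsum.symm)
  refine mem_six_of_eq_half_coords ?_ had
  push_cast at himI himJ himK
  ext
  · linear_combination hre / 2
  · linear_combination himI / 2
  · linear_combination himJ / 2
  · linear_combination himK / 2

lemma g6_sq : g6 ^ 2 = g6 - 1 := by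
  rw [sq]
  ext <;> simp only [Quaternion.re_mul, Quaternion.imI_mul, Quaternion.imJ_mul,
    Quaternion.imK_mul, Quaternion.re_sub, Quaternion.imI_sub, Quaternion.imJ_sub,
    Quaternion.imK_sub, Quaternion.re_one, Quaternion.imI_one, Quaternion.imJ_one,
    Quaternion.imK_one] <;> simp [g6]
  · linear_combination (-1 / 2 : K) * tau_sq
  all_goals ring

lemma g6'_eq_sub_one : g6' = g6 - 1 := by
  ext <;> simp only [Quaternion.re_sub, Quaternion.imI_sub, Quaternion.imJ_sub,
    Quaternion.imK_sub, Quaternion.re_one, Quaternion.imI_one, Quaternion.imJ_one,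
    Quaternion.imK_one] <;> norm_num [g6, g6']

lemma g6_mem_Ico : g6 ∈ Ico := by
  have hcomb : g6 = icoB 0 - icoB 3 - τ • icoB 0 + τ • icoB 2 := by
    ext <;> simp only [Quaternion.re_add, Quaternion.imI_add, Quaternion.imJ_add,
      Quaternion.imK_add, Quaternion.re_sub, Quaternion.imI_sub, Quaternion.imJ_sub,
      Quaternion.imK_sub, Quaternion.re_smul, Quaternion.imI_smul, Quaternion.imJ_smul,
      Quaternion.imK_smul] <;> simp [g6, icoB] <;> ring
  have hmem (i : Fin 4) : icoB i ∈ Ico ∧ τ • icoB i ∈ Ico :=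
    ⟨AddSubgroup.subset_closure (.inl ⟨i, rfl⟩), AddSubgroup.subset_closure (.inr ⟨i, rfl⟩)⟩
  rw [hcomb]
  exact add_mem (sub_mem (sub_mem (hmem 0).1 (hmem 3).1) (hmem 0).2) (hmem 2).2

lemma normSq_g6 : normSq g6 = 1 := by
  rw [normSq_def']
  simp only [g6]
  linear_combination (1 / 2 : K) * tau_sq

lemma twist_g6 : twist g6 = star g6 := by
  ext <;> simp only [re_twist, imI_twist, imJ_twist, imK_twist, Quaternion.re_star,
    Quaternion.imI_star, Quaternion.imJ_star, Quaternion.imK_star] <;>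
    simp [g6, conjK_tau, map_ofNat] <;> ring

lemma mem_ΔH4_and_mul_twist_eq_one_of_mem_six {ε : ℍK}
    (hε : ε ∈ ({1, -1, g6, -g6, g6', -g6'} : Set ℍK)) : ε ∈ ΔH4 ∧ ε * twist ε = 1 := by
  let P (x : ℍK) : Prop := x ∈ Ico ∧ normSq x = 1 ∧ twist x = star x
  have hneg {x : ℍK} (hx : P x) : P (-x) :=
    ⟨neg_mem hx.1, by rw [normSq_neg, hx.2.1], by rw [twist_neg, star_neg, hx.2.2]⟩
  have h₁ : P 1 := ⟨AddSubgroup.subset_closure (.inl ⟨0, rfl⟩), map_one _, by ext <;> simp⟩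
  have hg6 : P g6 := ⟨g6_mem_Ico, normSq_g6, twist_g6⟩
  have hg6' : P g6' := by
    rw [g6'_eq_sub_one]
    exact ⟨sub_mem hg6.1 h₁.1, by rw [← g6_sq, map_pow, normSq_g6, one_pow],
      by rw [twist_sub_one, twist_g6, star_sub, star_one]⟩
  have hP : P ε := by
    rcases hε with rfl | rfl | rfl | rfl | rfl | rfl
    exacts [h₁, hneg h₁, hg6, hneg hg6, hg6', hneg hg6']
  exact ⟨⟨hP.1, hP.2.1⟩, (mul_eq_one_iff_eq_star_of_normSq_eq_one hP.2.1).2 hP.2.2⟩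

/-- the solutions of ε·η(ε) = 1 in Δ_{H₄} are exactly the six
elements ±1, ±½(1,0,τ,τ−1), ±½(−1,0,τ,τ−1), and they form a cyclic group of
order 6 generated by ½(1,0,τ,τ−1). -/
theorem solutions_eps_twist_eps_eq_one :
    {ε ∈ ΔH4 | ε * twist ε = 1} = ({1, -1, g6, -g6, g6', -g6'} : Set ℍK) ∧
    ({1, -1, g6, -g6, g6', -g6'} : Set ℍK) = {x : ℍK | ∃ n : ℕ, x = g6 ^ n} ∧
    orderOf g6 = 6 := by
  have hre_ne (x : ℍK) (h : x.re ≠ 1) : x ≠ 1 := fun hx => h (by rw [hx]; rfl)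
  refine ⟨Set.Subset.antisymm (fun ε hε => mem_six_of_mul_twist_eq_one hε.1 hε.2)
    (fun ε hε => mem_ΔH4_and_mul_twist_eq_one_of_mem_six hε), ?_, ?_⟩
  · rw [g6'_eq_sub_one, setOf_exists_eq_pow_of_sq_eq_sub_one g6_sq]
  · refine orderOf_eq_six_of_sq_eq_sub_one g6_sq (hre_ne _ ?_) (hre_ne _ ?_)
    · rw [Quaternion.re_sub, Quaternion.re_one]
      norm_num [g6]
    · norm_num
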